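/- Let n ≥ 3 and let F_n be the flower graph obtained from the helm graph H_n by joining each of its n pendant vertices to the central vertex. Then the chromatic curling number of F_n equals n. -/

import Mathlib

open SimpleGraph Finset

/-- A proper vertex colouring of `G` with colour set `Fin k`. -/
def IsProperColoring {V : Type*} (G : SimpleGraph V) {k : ℕ} (C : V → Fin k) : Prop :=
  ∀ ⦃v w⦄, G.Adj v w → C v ≠ C w

/-- The chromatic number of `G`, as a natural number. -/
noncomputable def chi {V : Type*} (G : SimpleGraph V) : ℕ :=
  G.chromaticNumber.toNat

/-- θ(cᵢ): the number of vertices receiving colour `i` under the colouring `C`. -/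
def theta {V : Type*} [Fintype V] {k : ℕ} (C : V → Fin k) (i : Fin k) : ℕ :=
  (Finset.univ.filter fun v => C v = i).card

/-- The list of colour class sizes of `C`, sorted in descending order. -/
def classSizesDesc {V : Type*} [Fintype V] {k : ℕ} (C : V → Fin k) : List ℕ :=
  (List.insertionSort (· ≤ ·) (List.ofFn fun i => theta C i)).reverse

/-- A χ⁻-colouring of `G`: a proper colouring with exactly χ(G) colours such that,
greedily, the colour class of `c₁` is as large as possible, then the colour class of
`c₂` is as large as possible among the remaining vertices, and so on; equivalently,
the descending sequence of colour class sizes is lexicographically maximal among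
all proper colourings with χ(G) colours. -/
def IsChiMinusColoring {V : Type*} [Fintype V] (G : SimpleGraph V)
    (C : V → Fin (chi G)) : Prop :=
  IsProperColoring G C ∧
    ∀ C' : V → Fin (chi G), IsProperColoring G C' →
      ¬ List.Lex (· < ·) (classSizesDesc C) (classSizesDesc C')

/-- The flower graph `Fₙ`: the helm graph `Hₙ` (rim vertices `some (v, false)`,
central vertex `none`, pendant vertices `some (v, true)`) together with edges joining
every pendant vertex to the central vertex. -/
def flowerG (n : ℕ) : SimpleGraph (Option (Fin n × Bool)) :=
  SimpleGraph.fromRel (fun a b =>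
    match a, b with
    | some (v, false), some (w, false) => w.val = (v.val + 1) % n
    | some (v, false), some (w, true) => w = v
    | none, some _ => True
    | _, _ => False)

section aux

variable {n : ℕ}

lemma flower_adj_none (p : Fin n × Bool) : (flowerG n).Adj none (some p) := by
  rw [flowerG, SimpleGraph.fromRel_adj]
  exact ⟨by simp, Or.inl trivial⟩

lemma flower_adj_pend (v : Fin n) :
    (flowerG n).Adj (some (v, false)) (some (v, true)) := by
  rw [flowerG, SimpleGraph.fromRel_adj]
  exact ⟨by simp, Or.inl rfl⟩

/-- every colour class of a proper colouring of the flower graph has at most `n`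
vertices. -/
lemma flower_theta_le (hn : 3 ≤ n) {k : ℕ} (D : Option (Fin n × Bool) → Fin k)
    (hD : IsProperColoring (flowerG n) D) (i : Fin k) : theta D i ≤ n := by
  by_cases hc : D none = i
  · have hsub : (Finset.univ.filter fun v => D v = i) ⊆ {none} := by
      intro v hv
      simp only [Finset.mem_filter] at hv
      match v with
      | none => simp
      | some p =>
        exact absurd (hc.trans hv.2.symm) (hD (flower_adj_none p))
    calc theta D i ≤ ({none} : Finset (Option (Fin n × Bool))).card :=
          Finset.card_le_card hsub
      _ = 1 := Finset.card_singleton _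
      _ ≤ n := by omega
  · have h0 : 0 < n := by omega
    have := Finset.card_le_card_of_injOn
      (s := Finset.univ.filter fun v => D v = i) (t := (Finset.univ : Finset (Fin n)))
      (fun v => match v with
        | none => ⟨0, h0⟩
        | some (w, _) => w)
      (fun _ _ => Finset.mem_univ _) ?_
    · simpa [theta] using this
    · intro u hu w hw huw
      simp only [Finset.coe_filter, Set.mem_setOf_eq, Finset.mem_univ, true_and] at hu hw
      match u, w with
      | none, _ => exact absurd hu hc
      | some _, none => exact absurd hw hc
      | some (a, ba), some (b, bb) =>
        simp only at huw
        subst huw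
        match ba, bb with
        | false, false => rfl
        | true, true => rfl
        | false, true =>
          exact absurd (hu.trans hw.symm) (hD (flower_adj_pend a))
        | true, false =>
          exact absurd (hw.trans hu.symm) (hD (flower_adj_pend a))

lemma mem_classSizesDesc_iff {V : Type*} [Fintype V] {k : ℕ} (D : V → Fin k) (x : ℕ) :
    x ∈ classSizesDesc D ↔ ∃ i, theta D i = x := by
  rw [classSizesDesc, List.mem_reverse, (List.perm_insertionSort _ _).mem_iff,
    List.mem_ofFn]

lemma length_classSizesDesc {V : Type*} [Fintype V] {k : ℕ} (D : V → Fin k) :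
    (classSizesDesc D).length = k := by
  rw [classSizesDesc, List.length_reverse, List.length_insertionSort, List.length_ofFn]

lemma sorted_classSizesDesc {V : Type*} [Fintype V] {k : ℕ} (D : V → Fin k) :
    (classSizesDesc D).Pairwise (fun a b => b ≤ a) := by
  rw [classSizesDesc, List.pairwise_reverse]
  exact List.pairwise_insertionSort _ _

end aux

theorem flowerGraph_chromaticCurlingNumber (n : ℕ) (hn : 3 ≤ n)
    (C : Option (Fin n × Bool) → Fin (chi (flowerG n)))
    (hC : IsChiMinusColoring (flowerG n) C) :
    Finset.univ.sup (theta C) = n := by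
  obtain ⟨hCp, hmax⟩ := hC
  -- three distinguished vertices
  set v0 : Fin n := ⟨0, by omega⟩ with hv0
  set v1 : Fin n := ⟨1, by omega⟩ with hv1
  have hadj01 : (flowerG n).Adj (some (v0, false)) (some (v1, false)) := by
    rw [flowerG, SimpleGraph.fromRel_adj]
    refine ⟨by simp [hv0, hv1], Or.inl ?_⟩
    show (v1 : Fin n).val = (v0.val + 1) % n
    simp [hv0, hv1, Nat.mod_eq_of_lt (show 1 < n by omega)]
  set c : Fin (chi (flowerG n)) := C none with hc
  set a : Fin (chi (flowerG n)) := C (some (v0, false)) with ha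
  set b : Fin (chi (flowerG n)) := C (some (v1, false)) with hb
  have hca : c ≠ a := hCp (flower_adj_none (v0, false))
  have hcb : c ≠ b := hCp (flower_adj_none (v1, false))
  have hab : a ≠ b := hCp hadj01
  -- the modified colouring: keep `C` on centre and rim, recolour each pendant
  -- with `a` unless its rim vertex has colour `a`, in which case use `b`.
  set C' : Option (Fin n × Bool) → Fin (chi (flowerG n)) := fun v =>
    match v with
    | none => c
    | some (w, false) => C (some (w, false))
    | some (w, true) => if C (some (w, false)) = a then b else a
    with hC'
  have hC'p : IsProperColoring (flowerG n) C' := by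
    intro x y hxy
    have hxy' := hxy
    rw [flowerG, SimpleGraph.fromRel_adj] at hxy'
    obtain ⟨hne, hrel⟩ := hxy'
    match x, y with
    | none, none => exact absurd rfl hne
    | none, some (w, false) => exact hCp (flower_adj_none (w, false))
    | none, some (w, true) =>
      show c ≠ (if C (some (w, false)) = a then b else a)
      split <;> [exact hcb; exact hca]
    | some (w, false), none => exact (hCp (flower_adj_none (w, false))).symm
    | some (w, true), none =>
      show (if C (some (w, false)) = a then b else a) ≠ c
      split <;> [exact hcb.symm; exact hca.symm]
    | some (w, false), some (u, false) => exact hCp hxy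
    | some (w, false), some (u, true) =>
      have hu : u = w := by
        simp only at hrel
        rcases hrel with h | h
        · exact h
        · exact absurd h (by simp)
      subst hu
      show C (some (u, false)) ≠ (if C (some (u, false)) = a then b else a)
      split
      · next h => rw [h]; exact hab
      · next h => exact h
    | some (w, true), some (u, false) =>
      have hw : w = u := by
        simp only at hrel
        rcases hrel with h | h
        · exact absurd h (by simp)
        · exact h
      subst hw
      show (if C (some (w, false)) = a then b else a) ≠ C (some (w, false))
      split
      · next h => rw [h]; exact hab.symm
      · next h => exact (Ne.symm h)
    | some (w, true), some (u, true) =>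
      exfalso
      simp only at hrel
      rcases hrel with h | h <;> exact h
  -- the colour class of `a` under `C'` has exactly `n` vertices
  have htheta' : theta C' a = n := by
    have himg : (Finset.univ.filter fun v => C' v = a) =
        Finset.univ.image (fun v : Fin n =>
          if C (some (v, false)) = a then some (v, false) else some (v, true)) := by
      ext v
      simp only [Finset.mem_filter, Finset.mem_univ, true_and, Finset.mem_image]
      constructor
      · intro hv
        match v with
        | none => exact absurd hv (by simpa [hC'] using hca)
        | some (w, false) =>
          refine ⟨w, ?_⟩
          have : C (some (w, false)) = a := hv
          simp [this]
        | some (w, true) =>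
          refine ⟨w, ?_⟩
          have hne : C (some (w, false)) ≠ a := by
            intro h
            simp only [hC'] at hv
            rw [if_pos h] at hv
            exact hab hv.symm
          simp [hne]
      · rintro ⟨w, hw⟩
        by_cases h : C (some (w, false)) = a
        · rw [if_pos h] at hw
          subst hw
          exact h
        · rw [if_neg h] at hw
          subst hw
          show (if C (some (w, false)) = a then b else a) = a
          rw [if_neg h]
    have hinj : Function.Injective (fun v : Fin n =>
        if C (some (v, false)) = a then some (v, false) else some (v, true)) := by
      intro x y hxy
      simp only at hxy
      split_ifs at hxy <;> simpa using hxy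
    rw [theta, himg, Finset.card_image_of_injective _ hinj]
    simp
  -- bounds on colour class sizes
  have hle : ∀ i, theta C i ≤ n := flower_theta_le hn C hCp
  have hle' : ∀ i, theta C' i ≤ n := flower_theta_le hn C' hC'p
  have hsup_le : Finset.univ.sup (theta C) ≤ n :=
    Finset.sup_le fun i _ => hle i
  refine le_antisymm hsup_le ?_
  by_contra hlt'
  have hlt : Finset.univ.sup (theta C) < n := lt_of_not_ge hlt'
  -- the lists are nonempty since `chi (flowerG n) > 0`
  have hk : 0 < chi (flowerG n) := a.pos
  have hL : (classSizesDesc C).length = chi (flowerG n) := length_classSizesDesc C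
  have hL' : (classSizesDesc C').length = chi (flowerG n) := length_classSizesDesc C'
  obtain ⟨x, t, hxt⟩ : ∃ x t, classSizesDesc C = x :: t := by
    cases h : classSizesDesc C with
    | nil => rw [h] at hL; simp at hL; omega
    | cons x t => exact ⟨x, t, rfl⟩
  obtain ⟨y, t', hyt⟩ : ∃ y t', classSizesDesc C' = y :: t' := by
    cases h : classSizesDesc C' with
    | nil => rw [h] at hL'; simp at hL'; omega
    | cons y t' => exact ⟨y, t', rfl⟩
  -- head of `classSizesDesc C` is below `n`
  have hx_lt : x < n := by
    have hxmem : x ∈ classSizesDesc C := by rw [hxt]; exact List.mem_cons_self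
    obtain ⟨i, hi⟩ := (mem_classSizesDesc_iff C x).1 hxmem
    calc x = theta C i := hi.symm
      _ ≤ Finset.univ.sup (theta C) := Finset.le_sup (Finset.mem_univ i)
      _ < n := hlt
  -- head of `classSizesDesc C'` equals `n`
  have hy_eq : y = n := by
    have hymem : y ∈ classSizesDesc C' := by rw [hyt]; exact List.mem_cons_self
    obtain ⟨i, hi⟩ := (mem_classSizesDesc_iff C' y).1 hymem
    have hyle : y ≤ n := hi ▸ hle' i
    have hnmem : n ∈ classSizesDesc C' := (mem_classSizesDesc_iff C' n).2 ⟨a, htheta'⟩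
    rw [hyt] at hnmem
    have hsorted := sorted_classSizesDesc C'
    rw [hyt] at hsorted
    rcases List.mem_cons.1 hnmem with h | h
    · omega
    · have := List.rel_of_pairwise_cons hsorted h
      omega
  exact hmax C' hC'p (by rw [hxt, hyt]; exact List.Lex.rel (by omega))
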